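/- arXiv:2012.07200 — 2 statements merged into one kernel-verified Lean document; each statement's English description precedes it below -/
import Mathlib

section
/- If P is a connected finite poset of height one, then the type-A Lie poset algebra g_A(P) is not contact. -/
/-!
A contact form `φ` makes the extended matrix `\widehat{B}_φ` nonsingular, which forces
`ker B_φ ∩ ker φ = 0`; on the other hand `B_φ` is alternating on an odd-dimensional space, so
there is `x ≠ 0` in `ker B_φ`, and then `φ x ≠ 0`.

In height one every relation `i ≺ j` has `i` minimal and `j` maximal, so `e_{ij}` is an
eigenvector of `ad y` with eigenvalue `y_{ii} - y_{jj}`. Hence `φ e_{ij} = 0` would put `e_{ij}`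
in `ker B_φ ∩ ker φ`; so `φ e_{ij} ≠ 0`, and `x ∈ ker B_φ` gives `x_{ii} = x_{jj}` along every
edge of the Hasse diagram. By connectivity and trace zero the diagonal of `x` vanishes, and then
a diagonal grading element `Y` satisfies `⁅x, Y⁆ = x`, whence `φ x = φ ⁅x, Y⁆ = 0`.
-/

open Matrix

attribute [local instance 100] LieRing.ofAssociativeRing

/-- A finite poset on `Fin n`, compatible with the natural order on `Fin n`. -/
structure FinPoset (n : ℕ) where
  le : Fin n → Fin n → Prop
  le_refl : ∀ i, le i i
  le_antisymm : ∀ i j, le i j → le j i → i = j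
  le_trans : ∀ i j k, le i j → le j k → le i k
  le_compat : ∀ i j, le i j → i ≤ j

namespace FinPoset

/-- Strict relation of the poset. -/
def lt {n : ℕ} (P : FinPoset n) (i j : Fin n) : Prop := P.le i j ∧ i ≠ j

end FinPoset

/-- The type-A Lie poset algebra: trace-zero matrices supported on the relations of `P`. -/
def gA {n : ℕ} (P : FinPoset n) : LieSubalgebra ℂ (Matrix (Fin n) (Fin n) ℂ) where
  carrier := {M | Matrix.trace M = 0 ∧ ∀ i j, ¬ P.le i j → M i j = 0}
  add_mem' := by
    rintro a b ⟨ha1, ha2⟩ ⟨hb1, hb2⟩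
    exact ⟨by simp [Matrix.trace_add, ha1, hb1],
      fun i j h => by simp [Matrix.add_apply, ha2 i j h, hb2 i j h]⟩
  zero_mem' := ⟨Matrix.trace_zero _ _, fun _ _ _ => rfl⟩
  smul_mem' := by
    rintro c a ⟨ha1, ha2⟩
    exact ⟨by simp [Matrix.trace_smul, ha1],
      fun i j h => by simp [Matrix.smul_apply, ha2 i j h]⟩
  lie_mem' := by
    rintro a b ⟨ha1, ha2⟩ ⟨hb1, hb2⟩
    refine ⟨by simp [Ring.lie_def, Matrix.trace_sub, Matrix.trace_mul_comm a b], ?_⟩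
    intro i j h
    simp only [Ring.lie_def, Matrix.sub_apply, Matrix.mul_apply]
    rw [Finset.sum_eq_zero, Finset.sum_eq_zero, sub_zero]
    · intro k _
      by_cases hbk : P.le i k
      · have : ¬ P.le k j := fun hkj => h (P.le_trans i k j hbk hkj)
        simp [ha2 k j this]
      · simp [hb2 i k hbk]
    · intro k _
      by_cases hak : P.le i k
      · have : ¬ P.le k j := fun hkj => h (P.le_trans i k j hak hkj)
        simp [hb2 k j this]
      · simp [ha2 i k hak]

/-- The extended skew-symmetric matrix `\widehat{B}_φ` attached to an ordered
basis-like family `E` and a functional `φ`. -/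
def hatB {g : Type*} [LieRing g] [LieAlgebra ℂ g] {m : ℕ}
    (E : Fin m → g) (φ : Module.Dual ℂ g) : Matrix (Fin (m + 1)) (Fin (m + 1)) ℂ :=
  Matrix.of fun i j =>
    Fin.cases
      (Fin.cases 0 (fun j' => φ (E j')) j)
      (fun i' => Fin.cases (-(φ (E i'))) (fun j' => φ ⁅E i', E j'⁆) j)
      i

/-- `φ` is a contact form on `g`: `g` has odd dimension `2k+1` and the matrix
`\widehat{B}_φ` with respect to a basis is nonsingular. -/
def IsContactForm (g : Type*) [LieRing g] [LieAlgebra ℂ g] (φ : Module.Dual ℂ g) : Prop :=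
  ∃ (k : ℕ) (E : Module.Basis (Fin (2 * k + 1)) ℂ g), (hatB (⇑E) φ).det ≠ 0

/-- `g` is a contact Lie algebra. -/
def IsContact (g : Type*) [LieRing g] [LieAlgebra ℂ g] : Prop :=
  ∃ φ : Module.Dual ℂ g, IsContactForm g φ

/-- The kernel of the Kirillov form `B_φ(x,y) = φ⁅x,y⁆`. -/
def kerB {g : Type*} [LieRing g] [LieAlgebra ℂ g] (φ : Module.Dual ℂ g) : Submodule ℂ g where
  carrier := {x | ∀ y, φ ⁅x, y⁆ = 0}
  add_mem' := by intro a b ha hb; intro y; simp [add_lie, ha y, hb y]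
  zero_mem' := by intro y; simp
  smul_mem' := by intro c x hx; intro y; simp [smul_lie, hx y]

/-- The index of a Lie algebra: the minimal dimension of `ker B_φ`. -/
noncomputable def lieIndex (g : Type*) [LieRing g] [LieAlgebra ℂ g] : ℕ :=
  sInf {d | ∃ φ : Module.Dual ℂ g, Module.finrank ℂ (kerB φ) = d}

/-- The Hasse diagram of `P` as a simple graph on `Fin n`. -/
def hasse {n : ℕ} (P : FinPoset n) : SimpleGraph (Fin n) :=
  SimpleGraph.fromRel (fun i j => P.lt i j ∧ ∀ k, ¬ (P.lt i k ∧ P.lt k j))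

/-- The Hasse diagram of the subposet of `P` induced on `S`. -/
def hasseOn {n : ℕ} (P : FinPoset n) (S : Set (Fin n)) : SimpleGraph S :=
  SimpleGraph.fromRel (fun i j => P.lt i j ∧ ∀ k : S, ¬ (P.lt i k ∧ P.lt k j))

/-- The set of extremal (minimal or maximal) elements of `P`. -/
def extSet {n : ℕ} (P : FinPoset n) : Set (Fin n) :=
  {i | (∀ j, ¬ P.lt j i) ∨ (∀ j, ¬ P.lt i j)}

/-- The extremal elements of the subposet of `P` induced on `S`. -/
def extIn {n : ℕ} (P : FinPoset n) (S : Set (Fin n)) : Set (Fin n) :=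
  {i | i ∈ S ∧ ((∀ j ∈ S, ¬ P.lt j i) ∨ (∀ j ∈ S, ¬ P.lt i j))}

/-- The set of elements comparable to `i` (underlying set of `P^i`). -/
def cone {n : ℕ} (P : FinPoset n) (i : Fin n) : Set (Fin n) :=
  {j | P.le j i ∨ P.le i j}

/-- `D(P,i)`: the number of elements strictly below `i`. -/
noncomputable def downDeg {n : ℕ} (P : FinPoset n) (i : Fin n) : ℕ :=
  Set.ncard {j | P.lt j i}

/-- `U(P,i)`: the number of elements strictly above `i`. -/
noncomputable def upDeg {n : ℕ} (P : FinPoset n) (i : Fin n) : ℕ :=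
  Set.ncard {j | P.lt i j}

/-- `P` has a chain of cardinality `m`. -/
def hasChain {n : ℕ} (P : FinPoset n) (m : ℕ) : Prop :=
  ∃ s : Finset (Fin n), s.card = m ∧ ∀ i ∈ s, ∀ j ∈ s, P.le i j ∨ P.le j i

/-- `P` has height exactly `h`: it has a chain of cardinality `h+1` but none of
cardinality `h+2`. -/
def heightEq {n : ℕ} (P : FinPoset n) (h : ℕ) : Prop :=
  hasChain P (h + 1) ∧ ¬ hasChain P (h + 2)

theorem Matrix.det_eq_zero_of_transpose_eq_neg {ι R : Type*} [Fintype ι] [DecidableEq ι]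
    [CommRing R] [IsAddTorsionFree R] {A : Matrix ι ι R} (hι : Odd (Fintype.card ι))
    (hA : Aᵀ = -A) : A.det = 0 :=
  self_eq_neg.mp <| by
    rw [← neg_one_mul, ← hι.neg_one_pow, ← det_neg, ← hA, det_transpose]

section Kirillov

variable {g : Type*} [LieRing g] [LieAlgebra ℂ g]

theorem mem_kerB {φ : Module.Dual ℂ g} {x : g} : x ∈ kerB φ ↔ ∀ y, φ ⁅x, y⁆ = 0 := Iff.rfl

noncomputable def kirillovForm (φ : Module.Dual ℂ g) : g →ₗ[ℂ] g →ₗ[ℂ] ℂ :=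
  (LieAlgebra.ad ℂ g : g →ₗ[ℂ] Module.End ℂ g).compr₂ φ

@[simp]
theorem kirillovForm_apply (φ : Module.Dual ℂ g) (x y : g) : kirillovForm φ x y = φ ⁅x, y⁆ := rfl

theorem exists_mem_kerB_ne_zero_of_odd_finrank [FiniteDimensional ℂ g] (φ : Module.Dual ℂ g)
    (hodd : Odd (Module.finrank ℂ g)) : ∃ x ∈ kerB φ, x ≠ 0 := by
  let E := Module.finBasis ℂ g
  have hdet : (LinearMap.toMatrix₂ E E (kirillovForm φ)).det = 0 := by
    refine Matrix.det_eq_zero_of_transpose_eq_neg (by simpa using hodd) ?_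
    ext i j
    simp only [Matrix.transpose_apply, Matrix.neg_apply, LinearMap.toMatrix₂_apply,
      kirillovForm_apply]
    rw [← lie_skew, map_neg]
  rw [← not_ne_iff, ← LinearMap.separatingLeft_iff_det_ne_zero] at hdet
  simpa [LinearMap.SeparatingLeft, mem_kerB] using hdet

theorem hatB_mulVec_cons_repr {m : ℕ} (E : Module.Basis (Fin m) ℂ g) (φ : Module.Dual ℂ g)
    (x : g) : hatB E φ *ᵥ Fin.cons 0 (E.repr x) = Fin.cons (φ x) fun i => φ ⁅E i, x⁆ := by
  have expand (f : g →ₗ[ℂ] ℂ) : ∑ j, f (E j) * E.repr x j = f x := by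
    conv_rhs => rw [← E.sum_repr x]
    simp only [map_sum, map_smul, smul_eq_mul, mul_comm]
  ext i
  induction i using Fin.cases with
  | zero => simpa [Matrix.mulVec, dotProduct, Fin.sum_univ_succ, hatB] using expand φ
  | succ i =>
    simpa [Matrix.mulVec, dotProduct, Fin.sum_univ_succ, hatB] using expand (kirillovForm φ (E i))

theorem eq_zero_of_mem_kerB_of_det_hatB_ne_zero {m : ℕ} {E : Module.Basis (Fin m) ℂ g}
    {φ : Module.Dual ℂ g} (hdet : (hatB E φ).det ≠ 0) {x : g} (hx : φ x = 0)
    (hxB : x ∈ kerB φ) : x = 0 := by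
  have hmul : hatB E φ *ᵥ Fin.cons 0 (E.repr x) = 0 := by
    rw [hatB_mulVec_cons_repr]
    ext i
    induction i using Fin.cases with
    | zero => simpa using hx
    | succ i =>
      simp only [Fin.cons_succ, Pi.zero_apply]
      rw [← lie_skew, map_neg, hxB (E i), neg_zero]
  refine E.repr.map_eq_zero_iff.mp (Finsupp.ext fun j => ?_)
  simpa using congrFun (Matrix.eq_zero_of_mulVec_eq_zero hdet hmul) j.succ

end Kirillov

namespace FinPoset

variable {n : ℕ} {P : FinPoset n} {i j k : Fin n}

theorem not_lt_of_lt (hP : ¬ hasChain P 3) (hij : P.lt i j) : ¬ P.lt j k := by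
  intro hjk
  have hik : P.le i k := P.le_trans i j k hij.1 hjk.1
  have hik' : i ≠ k := fun h => hij.2 (P.le_antisymm i j hij.1 (h ▸ hjk.1))
  refine hP ⟨{i, j, k}, Finset.card_eq_three.mpr ⟨i, j, k, hij.2, hik', hjk.2, rfl⟩, ?_⟩
  simp only [Finset.mem_insert, Finset.mem_singleton]
  rintro _ (rfl | rfl | rfl) _ (rfl | rfl | rfl) <;>
    simp only [P.le_refl, hij.1, hjk.1, hik, true_or, or_true]

end FinPoset

namespace gA

variable {n : ℕ} {P : FinPoset n}

theorem trace_eq_zero (x : gA P) : Matrix.trace x.1 = 0 := x.2.1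

theorem apply_eq_zero (x : gA P) {a b : Fin n} (h : ¬ P.le a b) : x.1 a b = 0 := x.2.2 a b h

noncomputable def single {i j : Fin n} (h : P.lt i j) : gA P :=
  ⟨Matrix.single i j 1, Matrix.trace_single_eq_of_ne i j 1 h.2,
    fun _ _ hab => Matrix.single_apply_of_ne _ _ _ _ _ fun hc => hab (hc.1 ▸ hc.2 ▸ h.1)⟩

theorem single_ne_zero {i j : Fin n} (h : P.lt i j) : single h ≠ 0 := fun h0 => by
  simpa [single] using congrArg (fun x : gA P => x.1 i j) h0

noncomputable def diagonal (P : FinPoset n) (d : Fin n → ℂ) (hd : ∑ a, d a = 0) : gA P :=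
  ⟨Matrix.diagonal d, by simpa [Matrix.trace_diagonal] using hd,
    fun a b hab => Matrix.diagonal_apply_ne d fun h => hab (h ▸ P.le_refl a)⟩

/-- In height one `i` is minimal and `j` maximal, so column `i` and row `j` of `x` vanish off
the diagonal. -/
theorem lie_single (hP : ¬ hasChain P 3) (x : gA P) {i j : Fin n} (h : P.lt i j) :
    ⁅x, single h⁆ = (x.1 i i - x.1 j j) • single h := by
  have hcol : ∀ a, a ≠ i → x.1 a i = 0 := fun a ha =>
    apply_eq_zero x fun hai => FinPoset.not_lt_of_lt hP ⟨hai, ha⟩ h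
  have hrow : ∀ b, b ≠ j → x.1 j b = 0 := fun b hb =>
    apply_eq_zero x fun hjb => FinPoset.not_lt_of_lt hP h ⟨hjb, fun h' => hb h'.symm⟩
  have hleft : x.1 * Matrix.single i j 1 = x.1 i i • Matrix.single i j 1 := by
    ext a b
    by_cases hb : b = j
    · subst hb
      by_cases ha : a = i
      · simp [ha]
      · simp [hcol a ha, Matrix.single_apply_of_row_ne (Ne.symm ha)]
    · simp [hb, Matrix.single_apply_of_col_ne _ _ (Ne.symm hb)]
  have hright : Matrix.single i j 1 * x.1 = x.1 j j • Matrix.single i j 1 := by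
    ext a b
    by_cases ha : a = i
    · subst ha
      by_cases hb : b = j
      · simp [hb]
      · simp [hrow b hb, Matrix.single_apply_of_col_ne _ _ (Ne.symm hb)]
    · simp [ha, Matrix.single_apply_of_row_ne (Ne.symm ha)]
  apply Subtype.ext
  change x.1 * Matrix.single i j 1 - Matrix.single i j 1 * x.1
    = (x.1 i i - x.1 j j) • Matrix.single i j 1
  rw [hleft, hright, sub_smul]

theorem single_mem_kerB (hP : ¬ hasChain P 3) {φ : Module.Dual ℂ (gA P)} {i j : Fin n}
    (h : P.lt i j) (hφ : φ (single h) = 0) : single h ∈ kerB φ := fun y => by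
  rw [← lie_skew, map_neg, lie_single hP y h, map_smul, hφ, smul_zero, neg_zero]

theorem apply_diag_eq_of_mem_kerB (hP : ¬ hasChain P 3) {φ : Module.Dual ℂ (gA P)} {x : gA P}
    (hx : x ∈ kerB φ) {i j : Fin n} (h : P.lt i j) (hφ : φ (single h) ≠ 0) :
    x.1 i i = x.1 j j := by
  have hxe := hx (single h)
  rw [lie_single hP x h, map_smul, smul_eq_mul] at hxe
  exact sub_eq_zero.mp ((mul_eq_zero.mp hxe).resolve_right hφ)

theorem diag_eq_zero_of_connected (hconn : (hasse P).Connected) (x : gA P)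
    (hx : ∀ i j, P.lt i j → x.1 i i = x.1 j j) (a : Fin n) : x.1 a a = 0 := by
  have hconst : ∀ b, x.1 b b = x.1 a a := fun b => by
    obtain ⟨w⟩ := hconn.preconnected b a
    induction w with
    | nil => rfl
    | cons hadj _ ih =>
      refine Eq.trans ?_ ih
      rcases (SimpleGraph.fromRel_adj _ _ _).mp hadj with ⟨-, h | h⟩
      exacts [hx _ _ h.1, (hx _ _ h.1).symm]
  have htrace : (n : ℂ) * x.1 a a = 0 := by
    simpa [Matrix.trace, hconst] using trace_eq_zero x
  have hn : (n : ℂ) ≠ 0 := by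
    have : Nonempty (Fin n) := hconn.nonempty
    exact Nat.cast_ne_zero.mpr (Fin.pos_iff_nonempty.mpr this).ne'
  exact (mul_eq_zero.mp htrace).resolve_left hn

/-- The grading element: `diag(a)` with `a` the indicator of the non-minimal elements,
recentred to have trace zero. -/
theorem exists_lie_eq_self (hP : ¬ hasChain P 3) (x : gA P) (hx : ∀ a, x.1 a a = 0) :
    ∃ Y : gA P, ⁅x, Y⁆ = x := by
  classical
  set d : Fin n → ℂ := fun a => if ∃ b, P.lt b a then 1 else 0
  set t : ℂ := (∑ a, d a) / n
  have hd : ∑ a, (d a - t) = 0 := by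
    rw [Finset.sum_sub_distrib, Finset.sum_const, Finset.card_univ, Fintype.card_fin, nsmul_eq_mul,
      mul_div_cancel_of_imp', sub_self]
    intro hn
    obtain rfl : n = 0 := Nat.cast_eq_zero.mp hn
    simp
  refine ⟨diagonal P (fun a => d a - t) hd, Subtype.ext ?_⟩
  change x.1 * Matrix.diagonal _ - Matrix.diagonal _ * x.1 = x.1
  ext a b
  rw [Matrix.sub_apply, Matrix.mul_diagonal, Matrix.diagonal_mul]
  by_cases hab : P.lt a b
  · have ha : d a = 0 := if_neg fun ⟨c, hc⟩ => FinPoset.not_lt_of_lt hP hc hab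
    have hb : d b = 1 := if_pos ⟨a, hab⟩
    rw [ha, hb]; ring
  · have : x.1 a b = 0 := by
      by_cases h : a = b
      · exact h ▸ hx a
      · exact apply_eq_zero x fun hle => hab ⟨hle, h⟩
    rw [this]; ring

end gA

/-- a connected poset of height one never yields a contact type-A Lie
poset algebra. -/
theorem stmt3 {n : ℕ} (P : FinPoset n)
    (hconn : (hasse P).Connected) (hht : heightEq P 1) :
    ¬ IsContact ↥(gA P) := by
  rintro ⟨φ, k, E, hdet⟩
  have : FiniteDimensional ℂ (gA P) := Module.Finite.of_basis E
  have hker {x : gA P} (hx : φ x = 0) (hxB : x ∈ kerB φ) : x = 0 :=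
    eq_zero_of_mem_kerB_of_det_hatB_ne_zero hdet hx hxB
  obtain ⟨x, hxB, hx0⟩ :=
    exists_mem_kerB_ne_zero_of_odd_finrank φ (by simp [Module.finrank_eq_card_basis E])
  have hφe {i j : Fin n} (h : P.lt i j) : φ (gA.single h) ≠ 0 := fun hφ =>
    gA.single_ne_zero h (hker hφ (gA.single_mem_kerB hht.2 h hφ))
  have hdiag := gA.diag_eq_zero_of_connected hconn x fun i j h =>
    gA.apply_diag_eq_of_mem_kerB hht.2 hxB h (hφe h)
  obtain ⟨Y, hY⟩ := gA.exists_lie_eq_self hht.2 x hdiag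
  exact hx0 (hker (hY ▸ hxB Y) hxB)
end

section
/- If P is a connected finite poset, then the center of the type-A Lie poset algebra g_A(P) is trivial: Z(g_A(P)) = {0}. -/
open Matrix

attribute [local instance 100] LieRing.ofAssociativeRing

/-!
A central element `z` of `g_A(P)` commutes with `E_aa - E_bb`, which forces its off-diagonal
entries to vanish, and with `E_ab` for `a ≺ b`, which forces `z_aa = z_bb`. Along the Hasse
diagram of a connected poset the diagonal of `z` is therefore constant, so `z` is a scalar
matrix, and a trace-zero scalar matrix is zero.
-/

theorem SimpleGraph.Reachable.eq_of_forall_adj {V α : Type*} {G : SimpleGraph V} {u v : V}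
    (huv : G.Reachable u v) {f : V → α} (hf : ∀ a b, G.Adj a b → f a = f b) : f u = f v := by
  obtain ⟨w⟩ := huv
  induction w with
  | nil => rfl
  | cons hadj _ ih => exact (hf _ _ hadj).trans ih

namespace Matrix

variable {ι R : Type*} [Fintype ι] [Ring R]

theorem apply_eq_zero_of_commute_single_sub_single [DecidableEq ι] [IsAddTorsionFree R]
    {M : Matrix ι ι R} {a b : ι} (hab : a ≠ b) (h : Commute M (single a a 1 - single b b 1)) :
    M a b = 0 := by
  have hab' := congrFun (congrFun h.eq a) b
  simp only [mul_sub, sub_mul, sub_apply, mul_single_apply_same, single_mul_apply_same,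
    mul_single_apply_of_ne _ _ _ _ _ hab.symm, single_mul_apply_of_ne _ _ _ _ _ hab,
    mul_one, one_mul, sub_zero, zero_sub] at hab'
  rw [← two_nsmul_eq_zero, two_nsmul]
  exact neg_eq_iff_add_eq_zero.mp hab'

theorem apply_eq_apply_of_commute_single [DecidableEq ι] {M : Matrix ι ι R} {a b : ι}
    (h : Commute M (single a b 1)) : M a a = M b b := by
  simpa using congrFun (congrFun h.eq a) b

theorem eq_zero_of_trace_eq_zero_of_eq_scalar [Nonempty ι] [IsAddTorsionFree R]
    {M : Matrix ι ι R} (hoff : ∀ a b, a ≠ b → M a b = 0) (hdiag : ∀ a b, M a a = M b b)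
    (htr : M.trace = 0) : M = 0 := by
  obtain ⟨i₀⟩ := ‹Nonempty ι›
  have hdiag₀ : M i₀ i₀ = 0 := by
    have : Fintype.card ι • M i₀ i₀ = 0 := by
      rw [← htr, trace, ← Finset.card_univ, ← Finset.sum_const]
      exact Finset.sum_congr rfl fun i _ => hdiag i₀ i
    exact (nsmul_eq_zero_iff_right Fintype.card_ne_zero).mp this
  ext a b
  obtain rfl | hab := eq_or_ne a b
  · rw [hdiag a i₀, hdiag₀, zero_apply]
  · exact hoff a b hab

end Matrix

section LiePosetAlgebra

variable {n : ℕ} (P : FinPoset n)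

theorem FinPoset.lt_or_lt_of_hasse_adj {a b : Fin n} (h : (hasse P).Adj a b) :
    P.lt a b ∨ P.lt b a := by
  rw [hasse, SimpleGraph.fromRel_adj] at h
  exact h.2.imp And.left And.left

theorem single_mem_gA {i j : Fin n} (hij : P.lt i j) : single i j (1 : ℂ) ∈ gA P := by
  refine ⟨trace_single_eq_of_ne i j 1 hij.2, fun a b hab => ?_⟩
  rw [single_apply, if_neg]
  rintro ⟨rfl, rfl, -⟩
  exact hab hij.1

theorem single_sub_single_mem_gA {i j : Fin n} :
    single i i (1 : ℂ) - single j j 1 ∈ gA P := by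
  refine ⟨by simp, fun a b hab => ?_⟩
  have hne : ∀ k, ¬(k = a ∧ k = b) := by rintro k ⟨rfl, rfl⟩; exact hab (P.le_refl k)
  simp [hne]

variable {P}

theorem commute_of_forall_lie_eq_zero {z : gA P} (hz : ∀ y : gA P, ⁅z, y⁆ = 0) {y}
    (hy : y ∈ gA P) : Commute (z : Matrix (Fin n) (Fin n) ℂ) y := by
  have := congrArg Subtype.val (hz ⟨y, hy⟩)
  rwa [LieSubalgebra.coe_bracket, Ring.lie_def, ZeroMemClass.coe_zero, sub_eq_zero] at this

end LiePosetAlgebra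

/-- for a connected poset, the center of the type-A Lie poset algebra
is trivial. -/
theorem stmt9 {n : ℕ} (P : FinPoset n) (hconn : (hasse P).Connected) :
    ∀ z : ↥(gA P), (∀ y : ↥(gA P), ⁅z, y⁆ = 0) → z = 0 := by
  intro z hz
  have hcomm : ∀ y ∈ gA P, Commute (z : Matrix (Fin n) (Fin n) ℂ) y :=
    fun _ hy => commute_of_forall_lie_eq_zero hz hy
  have hoff : ∀ a b, a ≠ b → (z : Matrix (Fin n) (Fin n) ℂ) a b = 0 := fun _ _ hab =>
    apply_eq_zero_of_commute_single_sub_single hab (hcomm _ (single_sub_single_mem_gA P))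
  have hadj : ∀ a b, (hasse P).Adj a b →
      (z : Matrix (Fin n) (Fin n) ℂ) a a = (z : Matrix (Fin n) (Fin n) ℂ) b b := by
    intro a b hab
    rcases P.lt_or_lt_of_hasse_adj hab with hlt | hlt
    · exact apply_eq_apply_of_commute_single (hcomm _ (single_mem_gA P hlt))
    · exact (apply_eq_apply_of_commute_single (hcomm _ (single_mem_gA P hlt))).symm
  have : Nonempty (Fin n) := hconn.nonempty
  exact Subtype.ext <| eq_zero_of_trace_eq_zero_of_eq_scalar hoff
    (fun a b => (hconn a b).eq_of_forall_adj hadj) z.2.1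
end
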